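/- arXiv:1812.05924 — 11 statements merged into one kernel-verified Lean document; each statement's English description precedes it below -/
import Mathlib

section
/- Let α > 0, let λ be a real number, and let w : ℝ → ℂ be four times continuously differentiable on [0, α] with w'(0) = 0. Set h(x) = -λ²·w(x) + w''''(x). Then Re ∫₀^α h(x) · x · conj(w'(x)) dx = (λ²/2)·∫₀^α |w(x)|² dx - (λ²·α/2)·|w(α)|² + Re[(α·w'''(α) - w''(α))·conj(w'(α))] + (3/2)·∫₀^α |w''(x)|² dx - (α/2)·|w''(α)|². -/
open Complex intervalIntegral

/-!
For curves in any real inner product space, the two integrals that occur are computed by the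
fundamental theorem of calculus with explicit primitives: `x ‖g‖² / 2` is a primitive of
`‖g‖² / 2 + x ⟪g, g'⟫`, and `x ⟪v, v''⟫ - ⟪v, v'⟫ - x ‖v'‖² / 2` is a primitive of
`x ⟪v, v'''⟫ - (3/2) ‖v'‖²`. For `ℂ` viewed as a real inner product space,
`Re (z * conj u) = ⟪u, z⟫`, so the real part of the multiplier integral splits into
`-λ²` times the first identity for `g = w` plus the second for `v = w'`; the boundary terms
at `0` vanish because they carry a factor `x` or `w' 0 = 0`.
-/

open scoped RealInnerProductSpace Interval

section InnerProductSpace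

variable {F : Type*} [NormedAddCommGroup F] [InnerProductSpace ℝ F] {a b : ℝ}

theorem integral_mul_inner_deriv {g g' : ℝ → F}
    (hg : ∀ x ∈ [[a, b]], HasDerivAt g (g' x) x) (hg' : ContinuousOn g' [[a, b]]) :
    ∫ x in a..b, x * ⟪g x, g' x⟫ =
      (b * ‖g b‖ ^ 2 - a * ‖g a‖ ^ 2) / 2 - (∫ x in a..b, ‖g x‖ ^ 2) / 2 := by
  have hgc := HasDerivAt.continuousOn hg
  have hderiv : ∀ x ∈ [[a, b]], HasDerivAt (fun t => t * ‖g t‖ ^ 2 / 2)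
      (‖g x‖ ^ 2 / 2 + x * ⟪g x, g' x⟫) x := fun x hx => by
    refine (((hasDerivAt_id' x).mul (hg x hx).norm_sq).div_const 2).congr_deriv ?_
    ring
  have hftc := integral_eq_sub_of_hasDerivAt hderiv
    (ContinuousOn.intervalIntegrable (by fun_prop))
  rw [integral_add (ContinuousOn.intervalIntegrable (by fun_prop))
    (ContinuousOn.intervalIntegrable (by fun_prop)), integral_div] at hftc
  linarith

theorem integral_mul_inner_third_deriv {v v' v'' v''' : ℝ → F}
    (hv : ∀ x ∈ [[a, b]], HasDerivAt v (v' x) x) (hv' : ∀ x ∈ [[a, b]], HasDerivAt v' (v'' x) x)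
    (hv'' : ∀ x ∈ [[a, b]], HasDerivAt v'' (v''' x) x) (hv''' : ContinuousOn v''' [[a, b]]) :
    ∫ x in a..b, x * ⟪v x, v''' x⟫ =
      (b * ⟪v b, v'' b⟫ - ⟪v b, v' b⟫ - b * ‖v' b‖ ^ 2 / 2)
        - (a * ⟪v a, v'' a⟫ - ⟪v a, v' a⟫ - a * ‖v' a‖ ^ 2 / 2)
        + 3 / 2 * ∫ x in a..b, ‖v' x‖ ^ 2 := by
  have hvc := HasDerivAt.continuousOn hv
  have hv'c := HasDerivAt.continuousOn hv'
  have hv''c := HasDerivAt.continuousOn hv''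
  have hderiv : ∀ x ∈ [[a, b]], HasDerivAt
      (fun t => t * ⟪v t, v'' t⟫ - ⟪v t, v' t⟫ - t * ‖v' t‖ ^ 2 / 2)
      (x * ⟪v x, v''' x⟫ - 3 / 2 * ‖v' x‖ ^ 2) x := fun x hx => by
    refine ((((hasDerivAt_id' x).mul ((hv x hx).inner ℝ (hv'' x hx))).sub
      ((hv x hx).inner ℝ (hv' x hx))).sub
      (((hasDerivAt_id' x).mul (hv' x hx).norm_sq).div_const 2)).congr_deriv ?_
    rw [real_inner_self_eq_norm_sq]
    ring
  have hftc := integral_eq_sub_of_hasDerivAt hderiv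
    (ContinuousOn.intervalIntegrable (by fun_prop))
  rw [integral_sub (ContinuousOn.intervalIntegrable (by fun_prop))
    (ContinuousOn.intervalIntegrable (by fun_prop)), integral_const_mul] at hftc
  linarith

end InnerProductSpace

/-- Multiplier identity for the beam resolvent equation `-λ²w + w'''' = h`
multiplied by `x · conj w'` on `(0, α)`, with boundary condition `w'(0) = 0`. -/
theorem stmt_0 (α lam : ℝ) (hα : 0 < α)
    (w w' w'' w''' w'''' : ℝ → ℂ)
    (hw1 : ∀ x ∈ Set.Icc (0:ℝ) α, HasDerivAt w (w' x) x)
    (hw2 : ∀ x ∈ Set.Icc (0:ℝ) α, HasDerivAt w' (w'' x) x)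
    (hw3 : ∀ x ∈ Set.Icc (0:ℝ) α, HasDerivAt w'' (w''' x) x)
    (hw4 : ∀ x ∈ Set.Icc (0:ℝ) α, HasDerivAt w''' (w'''' x) x)
    (hcont : ContinuousOn w'''' (Set.Icc (0:ℝ) α))
    (hbc : w' 0 = 0)
    (h : ℝ → ℂ)
    (hh : ∀ x, h x = -(lam:ℂ)^2 * w x + w'''' x) :
    (∫ x in (0:ℝ)..α, h x * (x:ℂ) * (starRingEnd ℂ) (w' x)).re
      = lam^2/2 * (∫ x in (0:ℝ)..α, ‖w x‖^2)
        - lam^2 * α/2 * ‖w α‖^2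
        + (((α:ℂ) * w''' α - w'' α) * (starRingEnd ℂ) (w' α)).re
        + 3/2 * (∫ x in (0:ℝ)..α, ‖w'' x‖^2)
        - α/2 * ‖w'' α‖^2 := by
  rw [← Set.uIcc_of_le hα.le] at hw1 hw2 hw3 hw4 hcont
  have hwc := HasDerivAt.continuousOn hw1
  have hw'c := HasDerivAt.continuousOn hw2
  have hre : ∀ x : ℝ, (h x * x * (starRingEnd ℂ) (w' x)).re
      = -lam ^ 2 * (x * ⟪w x, w' x⟫) + x * ⟪w' x, w'''' x⟫ := fun x => by
    simp only [hh, Complex.inner, sq, neg_mul, mul_re, add_re, neg_re, ofReal_re, ofReal_im,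
      mul_zero, sub_zero, mul_im, zero_mul, add_zero, add_im, neg_im, conj_re, zero_add, conj_im,
      mul_neg, sub_neg_eq_add]
    ring
  have hint : IntervalIntegrable (fun x => h x * x * (starRingEnd ℂ) (w' x))
      MeasureTheory.volume 0 α := by
    simp_rw [hh]
    exact ContinuousOn.intervalIntegrable (by fun_prop)
  calc (∫ x in (0:ℝ)..α, h x * (x:ℂ) * (starRingEnd ℂ) (w' x)).re
      = ∫ x in (0:ℝ)..α, (h x * (x:ℂ) * (starRingEnd ℂ) (w' x)).re :=
        (intervalIntegral_re hint).symm
    _ = ∫ x in (0:ℝ)..α, (-lam ^ 2 * (x * ⟪w x, w' x⟫) + x * ⟪w' x, w'''' x⟫) :=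
        integral_congr fun x _ => hre x
    _ = -lam ^ 2 * (∫ x in (0:ℝ)..α, x * ⟪w x, w' x⟫)
          + ∫ x in (0:ℝ)..α, x * ⟪w' x, w'''' x⟫ := by
        rw [integral_add (ContinuousOn.intervalIntegrable (by fun_prop))
          (ContinuousOn.intervalIntegrable (by fun_prop)), integral_const_mul]
    _ = _ := by
        rw [integral_mul_inner_deriv hw1 hw'c, integral_mul_inner_third_deriv hw2 hw3 hw4 hcont]
        simp only [hbc, Complex.inner, inner_zero_left, zero_mul, mul_zero, sub_zero, sub_self,
          zero_div, neg_mul, mul_neg, sub_neg_eq_add, mul_re, sub_re, conj_re, conj_im, ofReal_re,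
          ofReal_im, sub_im, mul_im, add_zero]
        ring
end

section
/- Let β < l ≤ L be real numbers, let λ be a real number, and let w : ℝ → ℂ be four times continuously differentiable on [β, l]. Set h(x) = -λ²·w(x) + w''''(x). Then Re ∫_β^l h(x)·(L - x)·conj(w'(x)) dx = -(λ²/2)·∫_β^l |w(x)|² dx + (λ²/2)·[(L - β)·|w(β)|² - (L - l)·|w(l)|²] + Re[((L - l)·w'''(l) + w''(l))·conj(w'(l))] - Re[((L - β)·w'''(β) + w''(β))·conj(w'(β))] - (3/2)·∫_β^l |w''(x)|² dx + ((L - β)/2)·|w''(β)|² - ((L - l)/2)·|w''(l)|². -/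
open Complex ComplexConjugate intervalIntegral

/-!
The identity is the fundamental theorem of calculus for the flux
`F = (L - x) (-λ²/2 |w|² - |w''|²/2) + Re (((L - x) w''' + w'') conj w')`.
Differentiating, the terms `(L - x) Re (w''' conj w'')` coming from `|w''|²` and from the
boundary term cancel, and what remains is `Re (h (L - x) conj w') + λ²/2 |w|² + 3/2 |w''|²`.
-/

theorem HasDerivAt.re_mul_conj {u v : ℝ → ℂ} {u' v' : ℂ} {x : ℝ}
    (hu : HasDerivAt u u' x) (hv : HasDerivAt v v' x) :
    HasDerivAt (fun y => (u y * conj (v y)).re) ((u' * conj (v x) + u x * conj v').re) x := by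
  simpa only [Complex.inner, add_re, add_comm] using hv.inner ℝ hu

noncomputable def beamFlux (lam L : ℝ) (w w' w'' w''' : ℝ → ℂ) (x : ℝ) : ℝ :=
  (L - x) * (-(lam ^ 2 / 2) * ‖w x‖ ^ 2 - ‖w'' x‖ ^ 2 / 2)
    + ((((L : ℂ) - x) * w''' x + w'' x) * conj (w' x)).re

theorem hasDerivAt_beamFlux {lam L x : ℝ} {w w' w'' w''' : ℝ → ℂ} {w'''' : ℂ}
    (hw1 : HasDerivAt w (w' x) x) (hw2 : HasDerivAt w' (w'' x) x)
    (hw3 : HasDerivAt w'' (w''' x) x) (hw4 : HasDerivAt w''' w'''' x) :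
    HasDerivAt (beamFlux lam L w w' w'' w''')
      (((-(lam : ℂ) ^ 2 * w x + w'''') * ((L : ℂ) - x) * conj (w' x)).re
        + lam ^ 2 / 2 * ‖w x‖ ^ 2 + 3 / 2 * ‖w'' x‖ ^ 2) x := by
  have hweight : HasDerivAt (fun y : ℝ => (L : ℂ) - y) (-1) x := by
    simpa using (hasDerivAt_id x).ofReal_comp.const_sub (L : ℂ)
  have hdensity := ((hasDerivAt_id x).const_sub L).mul
    ((hw1.norm_sq.const_mul (-(lam ^ 2 / 2))).sub (hw3.norm_sq.div_const 2))
  have hboundary := ((hweight.mul hw4).add hw3).re_mul_conj hw2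
  refine (hdensity.add hboundary).congr_deriv ?_
  simp only [Pi.mul_apply, Pi.add_apply, Pi.sub_apply, id, Complex.inner, Complex.sq_norm,
    normSq_apply, mul_re, mul_im, add_re, add_im, sub_re, sub_im, neg_re, neg_im, conj_re, conj_im,
    ← ofReal_pow, ofReal_re, ofReal_im, one_re, one_im]
  ring

theorem stmt_1_general (β l L lam : ℝ) (hβl : β < l)
    (w w' w'' w''' w'''' : ℝ → ℂ)
    (hw1 : ∀ x ∈ Set.Icc β l, HasDerivAt w (w' x) x)
    (hw2 : ∀ x ∈ Set.Icc β l, HasDerivAt w' (w'' x) x)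
    (hw3 : ∀ x ∈ Set.Icc β l, HasDerivAt w'' (w''' x) x)
    (hw4 : ∀ x ∈ Set.Icc β l, HasDerivAt w''' (w'''' x) x)
    (hcont : ContinuousOn w'''' (Set.Icc β l))
    (h : ℝ → ℂ)
    (hh : ∀ x, h x = -(lam:ℂ)^2 * w x + w'''' x) :
    (∫ x in β..l, h x * ((L:ℂ) - (x:ℂ)) * (starRingEnd ℂ) (w' x)).re
      = -(lam^2/2) * (∫ x in β..l, ‖w x‖^2)
        + lam^2/2 * ((L - β) * ‖w β‖^2 - (L - l) * ‖w l‖^2)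
        + ((((L:ℂ) - (l:ℂ)) * w''' l + w'' l) * (starRingEnd ℂ) (w' l)).re
        - ((((L:ℂ) - (β:ℂ)) * w''' β + w'' β) * (starRingEnd ℂ) (w' β)).re
        - 3/2 * (∫ x in β..l, ‖w'' x‖^2)
        + (L - β)/2 * ‖w'' β‖^2
        - (L - l)/2 * ‖w'' l‖^2 := by
  simp only [hh]
  rw [← Set.uIcc_of_le hβl.le] at hw1 hw2 hw3 hw4 hcont
  have hw_cont := HasDerivAt.continuousOn hw1
  have hw'_cont := HasDerivAt.continuousOn hw2
  have hw''_cont := HasDerivAt.continuousOn hw3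
  have hw'''_cont := HasDerivAt.continuousOn hw4
  have hflux := integral_eq_sub_of_hasDerivAt
    (fun x hx => hasDerivAt_beamFlux (lam := lam) (L := L) (hw1 x hx) (hw2 x hx) (hw3 x hx) (hw4 x hx))
    (ContinuousOn.intervalIntegrable (by fun_prop))
  rw [integral_add, integral_add, integral_const_mul, integral_const_mul] at hflux
  · rw [← RCLike.re_to_complex, ← intervalIntegral_re (ContinuousOn.intervalIntegrable (by fun_prop))]
    simp only [RCLike.re_to_complex, beamFlux] at hflux ⊢
    linarith
  all_goals exact ContinuousOn.intervalIntegrable (by fun_prop)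

/-- Multiplier identity for the beam resolvent equation `-λ²w + w'''' = h`
multiplied by `(L - x) · conj w'` on `(β, l)` with `β < l ≤ L`. -/
theorem stmt_1 (β l L lam : ℝ) (hβl : β < l) (hlL : l ≤ L)
    (w w' w'' w''' w'''' : ℝ → ℂ)
    (hw1 : ∀ x ∈ Set.Icc β l, HasDerivAt w (w' x) x)
    (hw2 : ∀ x ∈ Set.Icc β l, HasDerivAt w' (w'' x) x)
    (hw3 : ∀ x ∈ Set.Icc β l, HasDerivAt w'' (w''' x) x)
    (hw4 : ∀ x ∈ Set.Icc β l, HasDerivAt w''' (w'''' x) x)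
    (hcont : ContinuousOn w'''' (Set.Icc β l))
    (h : ℝ → ℂ)
    (hh : ∀ x, h x = -(lam:ℂ)^2 * w x + w'''' x) :
    (∫ x in β..l, h x * ((L:ℂ) - (x:ℂ)) * (starRingEnd ℂ) (w' x)).re
      = -(lam^2/2) * (∫ x in β..l, ‖w x‖^2)
        + lam^2/2 * ((L - β) * ‖w β‖^2 - (L - l) * ‖w l‖^2)
        + ((((L:ℂ) - (l:ℂ)) * w''' l + w'' l) * (starRingEnd ℂ) (w' l)).re
        - ((((L:ℂ) - (β:ℂ)) * w''' β + w'' β) * (starRingEnd ℂ) (w' β)).re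
        - 3/2 * (∫ x in β..l, ‖w'' x‖^2)
        + (L - β)/2 * ‖w'' β‖^2
        - (L - l)/2 * ‖w'' l‖^2 :=
  stmt_1_general β l L lam hβl w w' w'' w''' w'''' hw1 hw2 hw3 hw4 hcont h hh
end

section
/- Let β < l be real numbers, let λ be a real number, and let w : ℝ → ℂ be four times continuously differentiable on [β, l] with w'(l) = 0. Set h(x) = -λ²·w(x) + w''''(x). Then Re ∫_β^l h(x)·(l - x)·conj(w'(x)) dx = -(λ²/2)·∫_β^l |w(x)|² dx + (λ²·(l - β)/2)·|w(β)|² - Re[((l - β)·w'''(β) + w''(β))·conj(w'(β))] - (3/2)·∫_β^l |w''(x)|² dx + ((l - β)/2)·|w''(β)|². -/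
/-!
With `⟪u, v⟫_ℝ = Re (v · conj u)` the identity is one between real integrals of inner
products, and it holds in any real inner product space. Both terms are integrated by parts
against the weight `l - x`, which vanishes at `l`: `(l - x) ⟪w, w'⟫` is half the derivative of
`(l - x) ‖w‖²` plus `‖w‖² / 2`, and `(l - x) ⟪w', w''''⟫` is the derivative of
`(l - x) ⟪w', w'''⟫ + ⟪w', w''⟫` minus `(l - x) ⟪w'', w'''⟫ + ‖w''‖²`; the first of these two
terms is again of the form `(l - x) ⟪f, f'⟫`, and `w'(l) = 0` removes the boundary terms at `l`.
-/

open Complex intervalIntegral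

open Set RealInnerProductSpace

open MeasureTheory (volume)

section InnerProductSpace

variable {E : Type*} [NormedAddCommGroup E] [InnerProductSpace ℝ E]

theorem integral_sub_mul_inner_self_deriv {a b : ℝ} (hab : a ≤ b) {f f' : ℝ → E}
    (hf : ∀ x ∈ Icc a b, HasDerivAt f (f' x) x) (hf' : ContinuousOn f' (Icc a b)) :
    ∫ x in a..b, (b - x) * ⟪f x, f' x⟫ =
      ((∫ x in a..b, ‖f x‖ ^ 2) - (b - a) * ‖f a‖ ^ 2) / 2 := by
  have hfc : ContinuousOn f (Icc a b) := HasDerivAt.continuousOn hf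
  have hint₁ : IntervalIntegrable (fun x => -‖f x‖ ^ 2) volume a b :=
    (hfc.norm.pow 2).neg.intervalIntegrable_of_Icc hab
  have hint₂ : IntervalIntegrable (fun x => (b - x) * ⟪f x, f' x⟫) volume a b :=
    ((continuousOn_const.sub continuousOn_id).mul (hfc.inner hf')).intervalIntegrable_of_Icc hab
  have hderiv : ∀ x ∈ uIcc a b, HasDerivAt (fun x => (b - x) * ‖f x‖ ^ 2)
      (-‖f x‖ ^ 2 + 2 * ((b - x) * ⟪f x, f' x⟫)) x := by
    intro x hx
    rw [uIcc_of_le hab] at hx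
    exact (((hasDerivAt_id' x).const_sub b).mul (hf x hx).norm_sq).congr_deriv (by ring)
  have hftc := integral_eq_sub_of_hasDerivAt hderiv (hint₁.add (hint₂.const_mul 2))
  rw [integral_add hint₁ (hint₂.const_mul 2), integral_neg, integral_const_mul, sub_self,
    zero_mul] at hftc
  linarith

theorem integral_sub_mul_inner_deriv_fourthDeriv {a b : ℝ} (hab : a ≤ b)
    {w' w'' w''' w'''' : ℝ → E}
    (hw' : ∀ x ∈ Icc a b, HasDerivAt w' (w'' x) x)
    (hw'' : ∀ x ∈ Icc a b, HasDerivAt w'' (w''' x) x)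
    (hw''' : ∀ x ∈ Icc a b, HasDerivAt w''' (w'''' x) x)
    (hw'''' : ContinuousOn w'''' (Icc a b)) (hb : w' b = 0) :
    ∫ x in a..b, (b - x) * ⟪w' x, w'''' x⟫ =
      -((b - a) * ⟪w' a, w''' a⟫ + ⟪w' a, w'' a⟫) - 3 / 2 * (∫ x in a..b, ‖w'' x‖ ^ 2)
        + (b - a) / 2 * ‖w'' a‖ ^ 2 := by
  have hweight : ContinuousOn (fun x : ℝ => b - x) (Icc a b) :=
    continuousOn_const.sub continuousOn_id
  have hint₁ : IntervalIntegrable (fun x => (b - x) * ⟪w' x, w'''' x⟫) volume a b :=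
    (hweight.mul ((HasDerivAt.continuousOn hw').inner hw'''')).intervalIntegrable_of_Icc hab
  have hint₂ : IntervalIntegrable (fun x => (b - x) * ⟪w'' x, w''' x⟫) volume a b :=
    (hweight.mul ((HasDerivAt.continuousOn hw'').inner
      (HasDerivAt.continuousOn hw'''))).intervalIntegrable_of_Icc hab
  have hint₃ : IntervalIntegrable (fun x => ‖w'' x‖ ^ 2) volume a b :=
    ((HasDerivAt.continuousOn hw'').norm.pow 2).intervalIntegrable_of_Icc hab
  have hderiv : ∀ x ∈ uIcc a b,
      HasDerivAt (fun x => (b - x) * ⟪w' x, w''' x⟫ + ⟪w' x, w'' x⟫)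
        ((b - x) * ⟪w' x, w'''' x⟫ + (b - x) * ⟪w'' x, w''' x⟫ + ‖w'' x‖ ^ 2) x := by
    intro x hx
    rw [uIcc_of_le hab] at hx
    refine ((((hasDerivAt_id' x).const_sub b).mul ((hw' x hx).inner ℝ (hw''' x hx))).add
      ((hw' x hx).inner ℝ (hw'' x hx))).congr_deriv ?_
    rw [real_inner_self_eq_norm_sq]
    ring
  have hftc := integral_eq_sub_of_hasDerivAt hderiv ((hint₁.add hint₂).add hint₃)
  rw [integral_add (hint₁.add hint₂) hint₃, integral_add hint₁ hint₂,
    integral_sub_mul_inner_self_deriv hab hw'' (HasDerivAt.continuousOn hw''')] at hftc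
  simp only [hb, inner_zero_left, sub_self, zero_mul, zero_add, zero_sub] at hftc
  linarith

end InnerProductSpace

theorem Complex.re_integral_mul_sub_mul_conj {a b : ℝ} (hab : a ≤ b) {f g : ℝ → ℂ}
    (hf : ContinuousOn f (Icc a b)) (hg : ContinuousOn g (Icc a b)) :
    (∫ x in a..b, f x * ((b : ℂ) - (x : ℂ)) * (starRingEnd ℂ) (g x)).re =
      ∫ x in a..b, (b - x) * ⟪g x, f x⟫ := by
  have hint : IntervalIntegrable (fun x => f x * ((b : ℂ) - (x : ℂ)) * (starRingEnd ℂ) (g x))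
      volume a b :=
    ContinuousOn.intervalIntegrable_of_Icc hab (by fun_prop)
  rw [← reCLM_apply, ← reCLM.intervalIntegral_comp_comm hint]
  refine integral_congr fun x _ => ?_
  rw [reCLM_apply, Complex.inner, ← ofReal_sub, mul_right_comm, re_mul_ofReal, mul_comm]

/-- Multiplier identity for the beam resolvent equation `-λ²w + w'''' = h`
multiplied by `(l - x) · conj w'` on `(β, l)`, with boundary condition `w'(l) = 0`. -/
theorem stmt_2 (β l lam : ℝ) (hβl : β < l)
    (w w' w'' w''' w'''' : ℝ → ℂ)
    (hw1 : ∀ x ∈ Set.Icc β l, HasDerivAt w (w' x) x)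
    (hw2 : ∀ x ∈ Set.Icc β l, HasDerivAt w' (w'' x) x)
    (hw3 : ∀ x ∈ Set.Icc β l, HasDerivAt w'' (w''' x) x)
    (hw4 : ∀ x ∈ Set.Icc β l, HasDerivAt w''' (w'''' x) x)
    (hcont : ContinuousOn w'''' (Set.Icc β l))
    (hbc : w' l = 0)
    (h : ℝ → ℂ)
    (hh : ∀ x, h x = -(lam:ℂ)^2 * w x + w'''' x) :
    (∫ x in β..l, h x * ((l:ℂ) - (x:ℂ)) * (starRingEnd ℂ) (w' x)).re
      = -(lam^2/2) * (∫ x in β..l, ‖w x‖^2)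
        + lam^2 * (l - β)/2 * ‖w β‖^2
        - ((((l:ℂ) - (β:ℂ)) * w''' β + w'' β) * (starRingEnd ℂ) (w' β)).re
        - 3/2 * (∫ x in β..l, ‖w'' x‖^2)
        + (l - β)/2 * ‖w'' β‖^2 := by
  obtain rfl : h = fun x => -(lam:ℂ)^2 * w x + w'''' x := funext hh
  have cw := HasDerivAt.continuousOn hw1
  have cw' := HasDerivAt.continuousOn hw2
  have hweight : ContinuousOn (fun x : ℝ => l - x) (Icc β l) :=
    continuousOn_const.sub continuousOn_id
  have hint₁ : IntervalIntegrable (fun x => (l - x) * ⟪w x, w' x⟫) volume β l :=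
    (hweight.mul (cw.inner cw')).intervalIntegrable_of_Icc hβl.le
  have hint₂ : IntervalIntegrable (fun x => (l - x) * ⟪w' x, w'''' x⟫) volume β l :=
    (hweight.mul (cw'.inner hcont)).intervalIntegrable_of_Icc hβl.le
  have hexpand (x : ℝ) : (l - x) * ⟪w' x, -(lam:ℂ)^2 * w x + w'''' x⟫ =
      -lam ^ 2 * ((l - x) * ⟪w x, w' x⟫) + (l - x) * ⟪w' x, w'''' x⟫ := by
    rw [inner_add_right, Complex.inner (w' x) (_ * w x), ← ofReal_pow, ← ofReal_neg, mul_assoc,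
      re_ofReal_mul, ← Complex.inner, real_inner_comm]
    ring
  have hboundary : ((((l:ℂ) - (β:ℂ)) * w''' β + w'' β) * (starRingEnd ℂ) (w' β)).re
      = (l - β) * ⟪w' β, w''' β⟫ + ⟪w' β, w'' β⟫ := by
    rw [add_mul, add_re, ← ofReal_sub, mul_assoc, re_ofReal_mul, Complex.inner, Complex.inner]
  rw [Complex.re_integral_mul_sub_mul_conj hβl.le (by fun_prop) cw',
    integral_congr fun x _ => hexpand x, integral_add (hint₁.const_mul _) hint₂,
    integral_const_mul,
    integral_sub_mul_inner_self_deriv hβl.le hw1 cw',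
    integral_sub_mul_inner_deriv_fourthDeriv hβl.le hw2 hw3 hw4 hcont hbc, hboundary]
  ring
end

section
/- Let l < L be real numbers, let λ be a real number, and let u : ℝ → ℂ be twice continuously differentiable on [l, L]. Set h(x) = -λ²·u(x) - u''(x). Then Re ∫_l^L h(x)·(L - x)·conj(u'(x)) dx = (λ²·(L - l)/2)·|u(l)|² + ((L - l)/2)·|u'(l)|² - (λ²/2)·∫_l^L |u(x)|² dx - (1/2)·∫_l^L |u'(x)|² dx. -/
/-! The weighted energy `E(x) = (L - x) (λ² |u x|² + |u' x|²)` has derivative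
`-(λ² |u|² + |u'|²) - 2 Re (h (L - x) conj u')`, since `2 Re (u'' conj u') = (|u'|²)'`.
Integrating over `[l, L]`, where `E L = 0`, gives the identity. -/

open Complex intervalIntegral

theorem hasDerivAt_weighted_energy {u u' : ℝ → ℂ} {w : ℂ} {L lam x : ℝ}
    (hu : HasDerivAt u (u' x) x) (hu' : HasDerivAt u' w x) :
    HasDerivAt (fun y => (L - y) * (lam ^ 2 * ‖u y‖ ^ 2 + ‖u' y‖ ^ 2))
      (-(lam ^ 2 * ‖u x‖ ^ 2 + ‖u' x‖ ^ 2)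
        - 2 * ((-(lam : ℂ) ^ 2 * u x - w) * ((L : ℂ) - x) * starRingEnd ℂ (u' x)).re) x := by
  refine (((hasDerivAt_id' x).const_sub L).mul
    ((hu.norm_sq.const_mul (lam ^ 2)).add hu'.norm_sq)).congr_deriv ?_
  simp only [Pi.add_apply, ← ofReal_pow, Complex.inner, mul_re, sub_re, neg_re, ofReal_re,
    ofReal_im, conj_re, conj_im, sub_im, neg_im, mul_im]
  ring

/-- Multiplier identity for the wave resolvent equation `-λ²u - u'' = h`
multiplied by `(L - x) · conj u'` on `(l, L)`. -/
theorem stmt_3 (l L lam : ℝ) (hlL : l < L)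
    (u u' u'' : ℝ → ℂ)
    (hu1 : ∀ x ∈ Set.Icc l L, HasDerivAt u (u' x) x)
    (hu2 : ∀ x ∈ Set.Icc l L, HasDerivAt u' (u'' x) x)
    (hcont : ContinuousOn u'' (Set.Icc l L))
    (h : ℝ → ℂ)
    (hh : ∀ x, h x = -(lam:ℂ)^2 * u x - u'' x) :
    (∫ x in l..L, h x * ((L:ℂ) - (x:ℂ)) * (starRingEnd ℂ) (u' x)).re
      = lam^2 * (L - l)/2 * ‖u l‖^2
        + (L - l)/2 * ‖u' l‖^2
        - lam^2/2 * (∫ x in l..L, ‖u x‖^2)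
        - 1/2 * (∫ x in l..L, ‖u' x‖^2) := by
  simp only [hh]
  rw [← Set.uIcc_of_le hlL.le] at hu1 hu2 hcont
  have hu : ContinuousOn u (Set.uIcc l L) :=
    fun x hx => (hu1 x hx).continuousAt.continuousWithinAt
  have hu' : ContinuousOn u' (Set.uIcc l L) :=
    fun x hx => (hu2 x hx).continuousAt.continuousWithinAt
  have hF : ContinuousOn (fun x => (-(lam : ℂ) ^ 2 * u x - u'' x) * ((L : ℂ) - x) *
      starRingEnd ℂ (u' x)) (Set.uIcc l L) := by fun_prop
  have ftc := integral_eq_sub_of_hasDerivAt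
    (fun x hx => hasDerivAt_weighted_energy (L := L) (lam := lam) (hu1 x hx) (hu2 x hx))
    (ContinuousOn.intervalIntegrable (by fun_prop))
  have hre := reCLM.intervalIntegral_comp_comm (hF.intervalIntegrable (μ := MeasureTheory.volume))
  simp only [reCLM_apply] at hre
  rw [integral_sub, integral_neg, integral_add, integral_const_mul, integral_const_mul, hre] at ftc
  · simp only [sub_self, zero_mul, zero_sub] at ftc
    linarith
  all_goals exact ContinuousOn.intervalIntegrable (by fun_prop)
end

section
/- Let α > 0, let λ be a real number, and let u : ℝ → ℂ be twice continuously differentiable on [0, α]. Set h(x) = -λ²·u(x) - u''(x). Then Re ∫₀^α h(x)·x·conj(u'(x)) dx = (λ²/2)·∫₀^α |u(x)|² dx + (1/2)·∫₀^α |u'(x)|² dx - (α·λ²/2)·|u(α)|² - (α/2)·|u'(α)|². -/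
open Complex intervalIntegral

/-! Since `d/dx |f|² = 2 Re (f' · conj f)`, integrating `x · Re (f' · conj f)` by parts against
the weight `x` gives boundary terms minus `∫ |f|² / 2`. Taking the real part of `h · x · conj u'`
splits it into such integrals for `f = u` and `f = u'`. -/

open Set in
theorem integral_mul_re_deriv_mul_conj {f f' : ℝ → ℂ} {a b : ℝ}
    (hf : ∀ x ∈ uIcc a b, HasDerivAt f (f' x) x) (hf' : ContinuousOn f' (uIcc a b)) :
    ∫ x in a..b, x * (f' x * starRingEnd ℂ (f x)).re
      = (b * ‖f b‖ ^ 2 - a * ‖f a‖ ^ 2 - ∫ x in a..b, ‖f x‖ ^ 2) / 2 := by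
  have hnorm_sq : ∀ x ∈ uIcc a b,
      HasDerivAt (fun y => ‖f y‖ ^ 2) (2 * (f' x * starRingEnd ℂ (f x)).re) x := fun x hx => by
    simpa only [Complex.inner] using (hf x hx).norm_sq
  have hcont : ContinuousOn (fun x => 2 * (f' x * starRingEnd ℂ (f x)).re) (uIcc a b) := by
    have hf_cont : ContinuousOn f (uIcc a b) := HasDerivAt.continuousOn hf
    fun_prop
  have hparts := integral_mul_deriv_eq_deriv_mul (fun x _ => hasDerivAt_id x) hnorm_sq
    intervalIntegrable_const hcont.intervalIntegrable
  simp only [id, one_mul, mul_left_comm _ (2 : ℝ), integral_const_mul] at hparts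
  linarith

/-- Multiplier identity for the wave resolvent equation `-λ²u - u'' = h`
multiplied by `x · conj u'` on `(0, α)`. -/
theorem stmt_4 (α lam : ℝ) (hα : 0 < α)
    (u u' u'' : ℝ → ℂ)
    (hu1 : ∀ x ∈ Set.Icc (0:ℝ) α, HasDerivAt u (u' x) x)
    (hu2 : ∀ x ∈ Set.Icc (0:ℝ) α, HasDerivAt u' (u'' x) x)
    (hcont : ContinuousOn u'' (Set.Icc (0:ℝ) α))
    (h : ℝ → ℂ)
    (hh : ∀ x, h x = -(lam:ℂ)^2 * u x - u'' x) :
    (∫ x in (0:ℝ)..α, h x * (x:ℂ) * (starRingEnd ℂ) (u' x)).re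
      = lam^2/2 * (∫ x in (0:ℝ)..α, ‖u x‖^2)
        + 1/2 * (∫ x in (0:ℝ)..α, ‖u' x‖^2)
        - α * lam^2/2 * ‖u α‖^2
        - α/2 * ‖u' α‖^2 := by
  rw [← Set.uIcc_of_le hα.le] at hu1 hu2 hcont
  have hcu : ContinuousOn u (Set.uIcc 0 α) := HasDerivAt.continuousOn hu1
  have hcu' : ContinuousOn u' (Set.uIcc 0 α) := HasDerivAt.continuousOn hu2
  have hre : ∀ x : ℝ, (h x * x * starRingEnd ℂ (u' x)).re
      = -lam ^ 2 * (x * (u' x * starRingEnd ℂ (u x)).re)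
        - x * (u'' x * starRingEnd ℂ (u' x)).re := fun x => by
    simp only [hh, ← ofReal_pow, ← ofReal_neg, mul_re, mul_im, sub_re, sub_im, conj_re, conj_im,
      ofReal_re, ofReal_im]
    ring
  have hint_u : IntervalIntegrable (fun x : ℝ => x * (u' x * starRingEnd ℂ (u x)).re) MeasureTheory.volume 0 α :=
    ContinuousOn.intervalIntegrable (by fun_prop)
  have hint_u' : IntervalIntegrable (fun x : ℝ => x * (u'' x * starRingEnd ℂ (u' x)).re) MeasureTheory.volume 0 α :=
    ContinuousOn.intervalIntegrable (by fun_prop)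
  have hint : IntervalIntegrable (fun x : ℝ => h x * x * starRingEnd ℂ (u' x)) MeasureTheory.volume 0 α :=
    ContinuousOn.intervalIntegrable (by simp only [hh]; fun_prop)
  rw [← RCLike.re_to_complex, ← intervalIntegral_re hint]
  simp only [RCLike.re_to_complex, hre]
  rw [integral_sub (hint_u.const_mul _) hint_u', integral_const_mul,
    integral_mul_re_deriv_mul_conj hu1 hcu', integral_mul_re_deriv_mul_conj hu2 hcont]
  simp only [zero_mul, sub_zero]
  ring
end

section
/- Let β < l ≤ L be real numbers, let λ be a real number, and let u : ℝ → ℂ be twice continuously differentiable on [β, l]. Set h(x) = -λ²·u(x) - u''(x). Then Re ∫_β^l h(x)·(x - L)·conj(u'(x)) dx = (λ²/2)·∫_β^l |u(x)|² dx + (1/2)·∫_β^l |u'(x)|² dx + ((L - l)/2)·(λ²·|u(l)|² + |u'(l)|²) - ((L - β)/2)·(λ²·|u(β)|² + |u'(β)|²). -/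
open Complex intervalIntegral MeasureTheory

/-!
Writing `E(x) = λ²|u(x)|² + |u'(x)|²`, the product rule gives
`d/dx [(L - x)/2 · E(x)] = Re(h(x) (x - L) conj(u'(x))) - E(x)/2`, because the derivative of `E` is
`2 Re(conj(u') (λ²u + u''))` and `λ²u + u'' = -h`. Integrating over `[β, l]` yields the identity.
-/

theorem integral_eq_sub_add_integral_of_hasDerivAt_sub {E : Type*} [NormedAddCommGroup E]
    [NormedSpace ℝ E] [CompleteSpace E] {f g Φ : ℝ → E} {a b : ℝ}
    (hderiv : ∀ x ∈ Set.uIcc a b, HasDerivAt Φ (f x - g x) x)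
    (hf : IntervalIntegrable f volume a b) (hg : IntervalIntegrable g volume a b) :
    ∫ x in a..b, f x = Φ b - Φ a + ∫ x in a..b, g x := by
  rw [← integral_eq_sub_of_hasDerivAt hderiv (hf.sub hg), integral_sub hf hg]
  abel

theorem hasDerivAt_multiplier_energy {u u' u'' : ℝ → ℂ} {x : ℝ} (L lam : ℝ)
    (hu : HasDerivAt u (u' x) x) (hu' : HasDerivAt u' (u'' x) x) :
    HasDerivAt (fun y => (L - y) / 2 * (lam ^ 2 * ‖u y‖ ^ 2 + ‖u' y‖ ^ 2))
      (((-(lam : ℂ) ^ 2 * u x - u'' x) * ((x : ℂ) - L) * starRingEnd ℂ (u' x)).re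
        - (lam ^ 2 / 2 * ‖u x‖ ^ 2 + 1 / 2 * ‖u' x‖ ^ 2)) x := by
  have hweight : HasDerivAt (fun y : ℝ => (L - y) / 2) (-1 / 2) x := by
    simpa using ((hasDerivAt_id x).const_sub L).div_const 2
  refine (hweight.mul ((hu.norm_sq.const_mul (lam ^ 2)).add hu'.norm_sq)).congr_deriv ?_
  simp only [Pi.add_apply, Complex.inner, mul_re, sub_re, sub_im, mul_im, neg_re, neg_im,
    ofReal_re, ofReal_im, conj_re, conj_im, ← ofReal_pow]
  ring

theorem stmt_5_general (β l L lam : ℝ) (hβl : β < l)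
    (u u' u'' : ℝ → ℂ)
    (hu1 : ∀ x ∈ Set.Icc β l, HasDerivAt u (u' x) x)
    (hu2 : ∀ x ∈ Set.Icc β l, HasDerivAt u' (u'' x) x)
    (hcont : ContinuousOn u'' (Set.Icc β l))
    (h : ℝ → ℂ)
    (hh : ∀ x, h x = -(lam:ℂ)^2 * u x - u'' x) :
    (∫ x in β..l, h x * ((x:ℂ) - (L:ℂ)) * (starRingEnd ℂ) (u' x)).re
      = lam^2/2 * (∫ x in β..l, ‖u x‖^2)
        + 1/2 * (∫ x in β..l, ‖u' x‖^2)
        + (L - l)/2 * (lam^2 * ‖u l‖^2 + ‖u' l‖^2)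
        - (L - β)/2 * (lam^2 * ‖u β‖^2 + ‖u' β‖^2) := by
  simp only [hh]
  have hIcc : Set.uIcc β l = Set.Icc β l := Set.uIcc_of_le hβl.le
  have hcu : ContinuousOn u (Set.Icc β l) := fun x hx => (hu1 x hx).continuousAt.continuousWithinAt
  have hcu' : ContinuousOn u' (Set.Icc β l) :=
    fun x hx => (hu2 x hx).continuousAt.continuousWithinAt
  have hint : IntervalIntegrable
      (fun x => (-(lam:ℂ)^2 * u x - u'' x) * ((x:ℂ) - (L:ℂ)) * (starRingEnd ℂ) (u' x)) volume β l :=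
    ContinuousOn.intervalIntegrable_of_Icc hβl.le (by fun_prop)
  have hintRe : IntervalIntegrable
      (fun x => ((-(lam:ℂ)^2 * u x - u'' x) * ((x:ℂ) - (L:ℂ)) * (starRingEnd ℂ) (u' x)).re)
      volume β l :=
    ContinuousOn.intervalIntegrable_of_Icc hβl.le (by fun_prop)
  have hintu : IntervalIntegrable (fun x => ‖u x‖ ^ 2) volume β l :=
    ContinuousOn.intervalIntegrable_of_Icc hβl.le (by fun_prop)
  have hintu' : IntervalIntegrable (fun x => ‖u' x‖ ^ 2) volume β l :=
    ContinuousOn.intervalIntegrable_of_Icc hβl.le (by fun_prop)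
  rw [← RCLike.re_to_complex, ← intervalIntegral_re hint]
  simp only [RCLike.re_to_complex]
  rw [integral_eq_sub_add_integral_of_hasDerivAt_sub
      (fun x hx => hasDerivAt_multiplier_energy L lam (hu1 x (hIcc ▸ hx)) (hu2 x (hIcc ▸ hx)))
      hintRe ((hintu.const_mul _).add (hintu'.const_mul _)),
    integral_add (hintu.const_mul _) (hintu'.const_mul _), intervalIntegral.integral_const_mul,
    intervalIntegral.integral_const_mul]
  ring

/-- Multiplier identity for the wave resolvent equation `-λ²u - u'' = h`
multiplied by `(x - L) · conj u'` on `(β, l)` with `β < l ≤ L`. -/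
theorem stmt_5 (β l L lam : ℝ) (hβl : β < l) (hlL : l ≤ L)
    (u u' u'' : ℝ → ℂ)
    (hu1 : ∀ x ∈ Set.Icc β l, HasDerivAt u (u' x) x)
    (hu2 : ∀ x ∈ Set.Icc β l, HasDerivAt u' (u'' x) x)
    (hcont : ContinuousOn u'' (Set.Icc β l))
    (h : ℝ → ℂ)
    (hh : ∀ x, h x = -(lam:ℂ)^2 * u x - u'' x) :
    (∫ x in β..l, h x * ((x:ℂ) - (L:ℂ)) * (starRingEnd ℂ) (u' x)).re
      = lam^2/2 * (∫ x in β..l, ‖u x‖^2)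
        + 1/2 * (∫ x in β..l, ‖u' x‖^2)
        + (L - l)/2 * (lam^2 * ‖u l‖^2 + ‖u' l‖^2)
        - (L - β)/2 * (lam^2 * ‖u β‖^2 + ‖u' β‖^2) :=
  stmt_5_general β l L lam hβl u u' u'' hu1 hu2 hcont h hh
end

section
/- Let l < L be real numbers, let λ be a real number, and let u : ℝ → ℂ be four times continuously differentiable on [l, L] with u'(l) = 0 and u'(L) = 0. Set h(x) = -λ²·u(x) + u''''(x). Then Re ∫_l^L h(x)·(L - x)·conj(u'(x)) dx = -(λ²/2)·∫_l^L |u(x)|² dx - (3/2)·∫_l^L |u''(x)|² dx + ((L - l)/2)·(λ²·|u(l)|² + |u''(l)|²). -/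
/-! The identity splits along `h = -λ²u + u''''` into two multiplier identities, each an instance
of the fundamental theorem of calculus for an explicit real primitive. For the zeroth-order term,
`Re (u (L - x) conj u') - ½|u|²` is the derivative of `½ (L - x) |u|²`. For the fourth-order
term, `Re (u'''' (L - x) conj u') + (3/2)|u''|²` is the derivative of
`(L - x) Re (u''' conj u') + Re (u'' conj u') - ½ (L - x) |u''|²`, the primitive produced by
integrating by parts twice. The boundary values are evaluated with `u'(l) = u'(L) = 0`. -/

open Complex intervalIntegral Set ComplexConjugate

theorem HasDerivAt.re_mul_conj_s6 {f g : ℝ → ℂ} {f' g' : ℂ} {x : ℝ}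
    (hf : HasDerivAt f f' x) (hg : HasDerivAt g g' x) :
    HasDerivAt (fun y => (f y * conj (g y)).re) (f' * conj (g x) + f x * conj g').re x :=
  reCLM.hasFDerivAt.comp_hasDerivAt x (hf.mul hg.star)

theorem re_integral_eq_sub_of_hasDerivAt {a b : ℝ} (hab : a ≤ b) {F : ℝ → ℂ} {G g : ℝ → ℝ}
    (hG : ∀ x ∈ Icc a b, HasDerivAt G ((F x).re + g x) x)
    (hF : ContinuousOn F (Icc a b)) (hg : ContinuousOn g (Icc a b)) :
    (∫ x in a..b, F x).re = G b - G a - ∫ x in a..b, g x := by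
  rw [← uIcc_of_le hab] at hG hF hg
  have hFre : IntervalIntegrable (fun x => (F x).re) MeasureTheory.volume a b :=
    (continuous_re.comp_continuousOn hF).intervalIntegrable
  have hFTC := integral_eq_sub_of_hasDerivAt hG (hFre.add hg.intervalIntegrable)
  rw [integral_add hFre hg.intervalIntegrable] at hFTC
  have hre : (∫ x in a..b, F x).re = ∫ x in a..b, (F x).re :=
    (reCLM.intervalIntegral_comp_comm hF.intervalIntegrable).symm
  rw [hre]
  exact eq_sub_of_add_eq hFTC

section Multiplier

variable {l L : ℝ}

theorem ContinuousOn.mul_sub_mul_conj {f g : ℝ → ℂ} {s : Set ℝ}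
    (hf : ContinuousOn f s) (hg : ContinuousOn g s) :
    ContinuousOn (fun x => f x * ((L : ℂ) - x) * conj (g x)) s := by
  fun_prop

theorem re_integral_mul_sub_mul_conj_of_hasDerivAt (hlL : l ≤ L) {u u' : ℝ → ℂ}
    (hu : ∀ x ∈ Icc l L, HasDerivAt u (u' x) x) (hu' : ContinuousOn u' (Icc l L)) :
    (∫ x in l..L, u x * ((L : ℂ) - x) * conj (u' x)).re
      = 1 / 2 * (∫ x in l..L, ‖u x‖ ^ 2) - (L - l) / 2 * ‖u l‖ ^ 2 := by
  have hu_cont : ContinuousOn u (Icc l L) := HasDerivAt.continuousOn hu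
  have hprim : ∀ x ∈ Icc l L, HasDerivAt (fun y => (L - y) / 2 * (u y * conj (u y)).re)
      ((u x * ((L : ℂ) - x) * conj (u' x)).re - 1 / 2 * ‖u x‖ ^ 2) x := by
    intro x hx
    refine ((((hasDerivAt_id x).const_sub L).div_const 2).mul
      ((hu x hx).re_mul_conj_s6 (hu x hx))).congr_deriv ?_
    simp only [id, Complex.sq_norm, normSq_apply, mul_re, mul_im, sub_re, sub_im, ofReal_re,
      ofReal_im, conj_re, conj_im, add_re]
    ring
  rw [re_integral_eq_sub_of_hasDerivAt hlL hprim (hu_cont.mul_sub_mul_conj hu')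
    (by fun_prop)]
  simp only [sub_self, zero_div, zero_mul, mul_conj, normSq_eq_norm_sq, ofReal_re, integral_neg,
    integral_const_mul]
  ring

theorem re_integral_third_deriv_mul_sub_mul_conj (hlL : l ≤ L) {v v' v'' v''' : ℝ → ℂ}
    (hv : ∀ x ∈ Icc l L, HasDerivAt v (v' x) x) (hv' : ∀ x ∈ Icc l L, HasDerivAt v' (v'' x) x)
    (hv'' : ∀ x ∈ Icc l L, HasDerivAt v'' (v''' x) x) (hv''' : ContinuousOn v''' (Icc l L))
    (hvl : v l = 0) (hvL : v L = 0) :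
    (∫ x in l..L, v''' x * ((L : ℂ) - x) * conj (v x)).re
      = -(3 / 2) * (∫ x in l..L, ‖v' x‖ ^ 2) + (L - l) / 2 * ‖v' l‖ ^ 2 := by
  have hv_cont : ContinuousOn v (Icc l L) := HasDerivAt.continuousOn hv
  have hv'_cont : ContinuousOn v' (Icc l L) := HasDerivAt.continuousOn hv'
  have hprim : ∀ x ∈ Icc l L, HasDerivAt (fun y => (L - y) * (v'' y * conj (v y)).re
        + (v' y * conj (v y)).re - (L - y) / 2 * (v' y * conj (v' y)).re)
      ((v''' x * ((L : ℂ) - x) * conj (v x)).re + 3 / 2 * ‖v' x‖ ^ 2) x := by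
    intro x hx
    have hLx := (hasDerivAt_id x).const_sub L
    refine (((hLx.mul ((hv'' x hx).re_mul_conj_s6 (hv x hx))).add
      ((hv' x hx).re_mul_conj_s6 (hv x hx))).sub
      ((hLx.div_const 2).mul ((hv' x hx).re_mul_conj_s6 (hv' x hx)))).congr_deriv ?_
    simp only [id, Complex.sq_norm, normSq_apply, mul_re, mul_im, sub_re, sub_im, ofReal_re,
      ofReal_im, conj_re, conj_im, add_re]
    ring
  rw [re_integral_eq_sub_of_hasDerivAt hlL hprim (hv'''.mul_sub_mul_conj hv_cont)
    (by fun_prop)]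
  simp only [hvl, hvL, map_zero, mul_zero, zero_re, sub_self, zero_div, zero_mul, mul_conj,
    normSq_eq_norm_sq, ofReal_re, integral_const_mul]
  ring

end Multiplier

/-- Multiplier identity for the beam resolvent equation `-λ²u + u'''' = h`
multiplied by `(L - x) · conj u'` on `(l, L)`, with boundary conditions
`u'(l) = 0` and `u'(L) = 0`. -/
theorem stmt_6 (l L lam : ℝ) (hlL : l < L)
    (u u' u'' u''' u'''' : ℝ → ℂ)
    (hu1 : ∀ x ∈ Set.Icc l L, HasDerivAt u (u' x) x)
    (hu2 : ∀ x ∈ Set.Icc l L, HasDerivAt u' (u'' x) x)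
    (hu3 : ∀ x ∈ Set.Icc l L, HasDerivAt u'' (u''' x) x)
    (hu4 : ∀ x ∈ Set.Icc l L, HasDerivAt u''' (u'''' x) x)
    (hcont : ContinuousOn u'''' (Set.Icc l L))
    (hbcl : u' l = 0) (hbcL : u' L = 0)
    (h : ℝ → ℂ)
    (hh : ∀ x, h x = -(lam:ℂ)^2 * u x + u'''' x) :
    (∫ x in l..L, h x * ((L:ℂ) - (x:ℂ)) * (starRingEnd ℂ) (u' x)).re
      = -(lam^2/2) * (∫ x in l..L, ‖u x‖^2)
        - 3/2 * (∫ x in l..L, ‖u'' x‖^2)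
        + (L - l)/2 * (lam^2 * ‖u l‖^2 + ‖u'' l‖^2) := by
  have hu_cont : ContinuousOn u (Icc l L) := HasDerivAt.continuousOn hu1
  have hu'_cont : ContinuousOn u' (Icc l L) := HasDerivAt.continuousOn hu2
  have hsplit : ∀ x, h x * ((L : ℂ) - x) * conj (u' x)
      = ((-lam ^ 2 : ℝ) : ℂ) * (u x * ((L : ℂ) - x) * conj (u' x))
        + u'''' x * ((L : ℂ) - x) * conj (u' x) := by
    intro x
    rw [hh]
    push_cast
    ring
  simp_rw [hsplit]
  rw [integral_add
      ((hu_cont.mul_sub_mul_conj hu'_cont).intervalIntegrable_of_Icc hlL.le |>.const_mul _)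
      ((hcont.mul_sub_mul_conj hu'_cont).intervalIntegrable_of_Icc hlL.le),
    integral_const_mul, add_re, re_ofReal_mul,
    re_integral_mul_sub_mul_conj_of_hasDerivAt hlL.le hu1 hu'_cont,
    re_integral_third_deriv_mul_sub_mul_conj hlL.le hu2 hu3 hu4 hcont hbcl hbcL]
  ring
end

section
/- Let α > 0, let ω > 0, let w : ℝ → ℂ be four times continuously differentiable on [0, α] with w(0) = 0 and w'(0) = 0, and set F(x) = w''''(x) - ω⁴·w(x), C₁' = w'''(α) + i·ω·w''(α) - ω²·w'(α) - i·ω³·w(α), and C₂' = w''(α) - ω²·w(α). Then for every x ∈ [0, α]: w'(x) - ω·w(x) = (C₂'/((1 - i)·ω))·[exp(-i·ω·(x - α)) - exp(-ω·x)·exp(i·ω·α)] + (C₁'/(2·ω²))·[sin(ω·(x - α)) - cos(ω·(x - α)) + exp(-ω·x)·(sin(ω·α) + cos(ω·α))] + (1/ω)·∫₀^x ∫_α^τ exp(-ω·(x - τ))·sin(ω·(τ - s))·F(s) ds dτ. -/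
/-!
With `h = w'' - ω²w` one has `h'' + ω²h = F`. Since `d² + ω² = (d - iω)(d + iω)`, the
combinations `h' ± iωh` solve first-order equations `u' = ±iωu + F`, which integrate explicitly;
subtracting the two solutions gives the variation-of-constants formula for `h`, whose data at `α`
are `h(α) = C₂'` and `h'(α) + iωh(α) = C₁'`. In the same way `g = w' - ωw` solves
`g' = -ωg + h` with `g(0) = 0`, so `g(x) = ∫₀ˣ e^{-ω(x-τ)} h(τ) dτ`; inserting the formula for `h`
and evaluating the two elementary integrals gives the claim.
-/

open Complex intervalIntegral Set

theorem Convex.eq_of_hasDerivWithinAt_zero {E : Type*} [NormedAddCommGroup E] [NormedSpace ℝ E]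
    {f : ℝ → E} {s : Set ℝ} (hs : Convex ℝ s) (hf : ∀ x ∈ s, HasDerivWithinAt f 0 s x)
    {a b : ℝ} (ha : a ∈ s) (hb : b ∈ s) : f b = f a := by
  simpa [sub_eq_zero] using
    hs.norm_image_sub_le_of_norm_hasDerivWithin_le (C := 0) hf (fun _ _ => by simp) ha hb

theorem eq_exp_mul_add_integral_of_hasDerivWithinAt {f G : ℝ → ℂ} {c : ℂ} {a b t₀ : ℝ}
    (hf : ∀ x ∈ Icc a b, HasDerivWithinAt f (c * f x + G x) (Icc a b) x)
    (hG : ContinuousOn G (Icc a b)) (ht₀ : t₀ ∈ Icc a b) {x : ℝ} (hx : x ∈ Icc a b) :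
    f x = exp (c * (x - t₀)) * f t₀ + ∫ τ in t₀..x, exp (c * (x - τ)) * G τ := by
  have hcont : ContinuousOn (fun τ : ℝ => exp (-c * τ) * G τ) (Icc a b) := by fun_prop
  have hconst : ∀ y ∈ Icc a b, HasDerivWithinAt
      (fun y : ℝ => exp (-c * y) * f y - ∫ τ in t₀..y, exp (-c * τ) * G τ) 0 (Icc a b) y := by
    intro y hy
    have : Fact (y ∈ Icc a b) := ⟨hy⟩
    have hexp : HasDerivAt (fun y : ℝ => exp (-c * y)) (exp (-c * y) * -c) y := by
      simpa using ((hasDerivAt_id (y : ℂ)).const_mul (-c)).comp_ofReal.cexp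
    have hint : HasDerivWithinAt (fun y => ∫ τ in t₀..y, exp (-c * τ) * G τ)
        (exp (-c * y) * G y) (Icc a b) y := integral_hasDerivWithinAt_right
      ((hcont.mono (uIcc_subset_Icc ht₀ hy)).intervalIntegrable)
      (hcont.stronglyMeasurableAtFilter_nhdsWithin measurableSet_Icc y) (hcont y hy)
    exact ((hexp.hasDerivWithinAt.fun_mul (hf y hy)).fun_sub hint).congr_deriv (by ring)
  have hx_eq := (convex_Icc a b).eq_of_hasDerivWithinAt_zero hconst ht₀ hx
  simp only [integral_same, sub_zero] at hx_eq
  have hsplit : ∀ τ : ℝ, exp (c * (x - τ)) * G τ = exp (c * x) * (exp (-c * τ) * G τ) := by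
    intro τ
    rw [← mul_assoc, ← exp_add]
    congr 2
    ring
  simp_rw [hsplit, integral_const_mul]
  have hcancel : exp (c * x) * exp (-c * x) = 1 := by rw [← exp_add]; simp
  have hshift : exp (c * x) * exp (-c * t₀) = exp (c * (x - t₀)) := by rw [← exp_add]; ring_nf
  linear_combination exp (c * x) * hx_eq - f x * hcancel + f t₀ * hshift

theorem exp_I_mul_add_exp_neg_I_mul (a t : ℂ) :
    exp (I * a * t) + exp (-I * a * t) = 2 * cos (a * t) := by
  rw [show I * a * t = a * t * I by ring, show -I * a * t = -(a * t) * I by ring,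
    exp_mul_I, exp_mul_I, cos_neg, sin_neg]
  ring

theorem exp_I_mul_sub_exp_neg_I_mul (a t : ℂ) :
    exp (I * a * t) - exp (-I * a * t) = 2 * I * sin (a * t) := by
  rw [show I * a * t = a * t * I by ring, show -I * a * t = -(a * t) * I by ring,
    exp_mul_I, exp_mul_I, cos_neg, sin_neg]
  ring

theorem eq_cos_add_sin_add_integral_of_hasDerivWithinAt {h h' F : ℝ → ℂ} {ω a b α : ℝ}
    (hω : ω ≠ 0) (hh : ∀ x ∈ Icc a b, HasDerivWithinAt h (h' x) (Icc a b) x)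
    (hh' : ∀ x ∈ Icc a b, HasDerivWithinAt h' (F x - ω ^ 2 * h x) (Icc a b) x)
    (hF : ContinuousOn F (Icc a b)) (hα : α ∈ Icc a b) {x : ℝ} (hx : x ∈ Icc a b) :
    h x = h α * Real.cos (ω * (x - α)) + h' α / ω * Real.sin (ω * (x - α))
      + 1 / ω * ∫ s in α..x, Real.sin (ω * (x - s)) * F s := by
  have hωC : (ω : ℂ) ≠ 0 := ofReal_ne_zero.mpr hω
  have hfactor : ∀ σ : ℂ, σ ^ 2 = -1 → ∀ y ∈ Icc a b, HasDerivWithinAt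
      (fun y => h' y + σ * ω * h y) (σ * ω * (h' y + σ * ω * h y) + F y) (Icc a b) y := by
    intro σ hσ y hy
    refine ((hh' y hy).fun_add ((hh y hy).const_mul (σ * ω))).congr_deriv ?_
    linear_combination (-(ω : ℂ) ^ 2 * h y) * hσ
  have hsolve := fun σ hσ => eq_exp_mul_add_integral_of_hasDerivWithinAt
    (hfactor σ hσ) hF hα hx
  have hp := hsolve I I_sq
  have hq := hsolve (-I) (by rw [neg_sq, I_sq])
  have hint : ∀ σ : ℂ,
      IntervalIntegrable (fun s : ℝ => exp (σ * ω * (x - s)) * F s) MeasureTheory.volume α x :=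
    fun σ => ((by fun_prop : Continuous fun s : ℝ => exp (σ * ω * (x - s))).continuousOn.mul
      (hF.mono (uIcc_subset_Icc hα hx))).intervalIntegrable
  have hsin : ∫ s in α..x, (Real.sin (ω * (x - s)) : ℂ) * F s
      = ((∫ s in α..x, exp (I * ω * (x - s)) * F s)
        - ∫ s in α..x, exp (-I * ω * (x - s)) * F s) / (2 * I) := by
    rw [← integral_sub (hint I) (hint (-I)), eq_div_iff (by simp),
      ← intervalIntegral.integral_mul_const]
    refine integral_congr fun s _ => ?_
    push_cast
    linear_combination -F s * exp_I_mul_sub_exp_neg_I_mul ω (x - s)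
  rw [hsin]
  -- keep `field_simp` out of the integrands
  generalize (∫ s in α..x, exp (I * ω * (x - s)) * F s) = Jp at hp ⊢
  generalize (∫ s in α..x, exp (-I * ω * (x - s)) * F s) = Jm at hq ⊢
  push_cast
  field_simp
  linear_combination (hp - hq) + (I * ω * h α) * exp_I_mul_add_exp_neg_I_mul ω (x - α)
    + h' α * exp_I_mul_sub_exp_neg_I_mul ω (x - α)

theorem integral_exp_mul_sin (ω α x : ℝ) (hω : ω ≠ 0) :
    ∫ τ in (0:ℝ)..x, Real.exp (-(ω * (x - τ))) * Real.sin (ω * (τ - α))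
      = (Real.sin (ω * (x - α)) - Real.cos (ω * (x - α))
          + Real.exp (-(ω * x)) * (Real.sin (ω * α) + Real.cos (ω * α))) / (2 * ω) := by
  have hderiv : ∀ τ : ℝ, HasDerivAt
      (fun τ => Real.exp (-(ω * (x - τ))) * (Real.sin (ω * (τ - α)) - Real.cos (ω * (τ - α)))
        / (2 * ω))
      (Real.exp (-(ω * (x - τ))) * Real.sin (ω * (τ - α))) τ := by
    intro τ
    have hlin : HasDerivAt (fun τ : ℝ => ω * (τ - α)) ω τ := by
      simpa using ((hasDerivAt_id τ).sub_const α).const_mul ω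
    have harg : HasDerivAt (fun τ : ℝ => -(ω * (x - τ))) ω τ := by
      simpa using (((hasDerivAt_id τ).const_sub x).const_mul ω).fun_neg
    refine ((harg.exp.fun_mul (hlin.sin.fun_sub hlin.cos)).div_const (2 * ω)).congr_deriv ?_
    field_simp
    ring
  rw [integral_eq_sub_of_hasDerivAt (fun τ _ => hderiv τ)
    ((by fun_prop : Continuous _).intervalIntegrable _ _)]
  simp only [sub_self, sub_zero, mul_zero, neg_zero, Real.exp_zero, zero_sub, mul_neg,
    Real.sin_neg, Real.cos_neg, one_mul]
  ring

theorem integral_exp_mul_exp_neg_I_mul (ω α x : ℝ) (hω : ω ≠ 0) :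
    ∫ τ in (0:ℝ)..x, ((Real.exp (-(ω * (x - τ))) : ℝ) : ℂ) * exp (-(I * ((ω * (τ - α) : ℝ) : ℂ)))
      = (exp (-(I * ((ω * (x - α) : ℝ) : ℂ)))
          - ((Real.exp (-(ω * x)) : ℝ) : ℂ) * exp (I * ((ω * α : ℝ) : ℂ)))
        / ((1 - I) * ω) := by
  have hc : (1 - I) * (ω : ℂ) ≠ 0 :=
    mul_ne_zero (sub_ne_zero.mpr fun h => by simpa using congrArg im h) (ofReal_ne_zero.mpr hω)
  have hsplit : ∀ τ : ℝ,
      ((Real.exp (-(ω * (x - τ))) : ℝ) : ℂ) * exp (-(I * ((ω * (τ - α) : ℝ) : ℂ)))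
        = exp (-(ω * x) + I * (ω * α)) * exp ((1 - I) * ω * τ) := by
    intro τ
    push_cast
    rw [← exp_add, ← exp_add]
    ring_nf
  simp_rw [hsplit, intervalIntegral.integral_const_mul, integral_exp_mul_complex hc]
  push_cast
  rw [mul_div_assoc', mul_sub, ← exp_add, ← exp_add, ← exp_add]
  congr 2 <;> ring_nf

theorem integral_exp_neg_mul_eq_of_forall_eq {ω α x : ℝ} {h F : ℝ → ℂ} {C₁ C₂ : ℂ}
    (hω : ω ≠ 0) (hh : ContinuousOn h (uIcc 0 x))
    (hrepr : ∀ τ ∈ uIcc 0 x, h τ = C₂ * exp (-(I * ((ω * (τ - α) : ℝ) : ℂ)))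
      + C₁ / ω * Real.sin (ω * (τ - α)) + 1 / ω * ∫ s in α..τ, Real.sin (ω * (τ - s)) * F s) :
    ∫ τ in (0:ℝ)..x, ((Real.exp (-(ω * (x - τ))) : ℝ) : ℂ) * h τ
      = C₂ / ((1 - I) * (ω:ℂ))
            * (exp (-(I * ((ω * (x - α) : ℝ) : ℂ)))
               - ((Real.exp (-(ω * x)) : ℝ) : ℂ) * exp (I * ((ω * α : ℝ) : ℂ)))
          + C₁ / (2 * (ω:ℂ)^2)
            * ((Real.sin (ω * (x - α)) - Real.cos (ω * (x - α))
                + Real.exp (-(ω * x)) * (Real.sin (ω * α) + Real.cos (ω * α)) : ℝ) : ℂ)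
          + (1 / (ω:ℂ))
            * ∫ τ in (0:ℝ)..x, ∫ s in α..τ,
                ((Real.exp (-(ω * (x - τ))) * Real.sin (ω * (τ - s)) : ℝ) : ℂ) * F s := by
  have hωC : (ω : ℂ) ≠ 0 := ofReal_ne_zero.mpr hω
  have hdouble : 1 / (ω : ℂ) * ∫ τ in (0:ℝ)..x, ∫ s in α..τ,
        ((Real.exp (-(ω * (x - τ))) * Real.sin (ω * (τ - s)) : ℝ) : ℂ) * F s
      = ∫ τ in (0:ℝ)..x, (((Real.exp (-(ω * (x - τ))) : ℝ) : ℂ) * h τ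
        - C₂ * (((Real.exp (-(ω * (x - τ))) : ℝ) : ℂ) * exp (-(I * ((ω * (τ - α) : ℝ) : ℂ))))
        - C₁ / ω * ((Real.exp (-(ω * (x - τ))) * Real.sin (ω * (τ - α)) : ℝ) : ℂ)) := by
    rw [← intervalIntegral.integral_const_mul]
    refine integral_congr fun τ hτ => ?_
    rw [hrepr τ hτ]
    simp_rw [ofReal_mul, mul_assoc, intervalIntegral.integral_const_mul]
    ring
  rw [hdouble, integral_sub, integral_sub, intervalIntegral.integral_const_mul,
    intervalIntegral.integral_const_mul, intervalIntegral.integral_ofReal,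
    integral_exp_mul_exp_neg_I_mul ω α x hω, integral_exp_mul_sin ω α x hω]
  · push_cast
    field_simp
    ring
  all_goals exact ContinuousOn.intervalIntegrable (by fun_prop)

theorem deriv_sub_mul_eq_integral_exp_mul {α ω : ℝ} {w w' w'' : ℝ → ℂ}
    (hw1 : ∀ x ∈ Icc (0:ℝ) α, HasDerivAt w (w' x) x)
    (hw2 : ∀ x ∈ Icc (0:ℝ) α, HasDerivAt w' (w'' x) x)
    (hcurv : ContinuousOn (fun y => w'' y - ω ^ 2 * w y) (Icc 0 α))
    (hbc0 : w 0 = 0) (hbc1 : w' 0 = 0) {x : ℝ} (hx : x ∈ Icc 0 α) :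
    w' x - ω * w x
      = ∫ τ in (0:ℝ)..x, ((Real.exp (-(ω * (x - τ))) : ℝ) : ℂ) * (w'' τ - ω ^ 2 * w τ) := by
  have hderiv : ∀ y ∈ Icc (0:ℝ) α, HasDerivWithinAt (fun y => w' y - ω * w y)
      (-ω * (w' y - ω * w y) + (w'' y - ω ^ 2 * w y)) (Icc 0 α) y := fun y hy =>
    ((hw2 y hy).fun_sub ((hw1 y hy).const_mul _)).hasDerivWithinAt.congr_deriv (by ring)
  rw [eq_exp_mul_add_integral_of_hasDerivWithinAt hderiv hcurv ⟨le_rfl, hx.1.trans hx.2⟩ hx,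
    hbc0, hbc1]
  simp only [mul_zero, sub_zero, zero_add]
  refine integral_congr fun τ _ => ?_
  push_cast
  ring_nf

theorem deriv2_sub_sq_mul_eq {α ω : ℝ} (hω : ω ≠ 0) {w w' w'' w''' w'''' F : ℝ → ℂ} {C₁ C₂ : ℂ}
    (hw1 : ∀ x ∈ Icc (0:ℝ) α, HasDerivAt w (w' x) x)
    (hw2 : ∀ x ∈ Icc (0:ℝ) α, HasDerivAt w' (w'' x) x)
    (hw3 : ∀ x ∈ Icc (0:ℝ) α, HasDerivAt w'' (w''' x) x)
    (hw4 : ∀ x ∈ Icc (0:ℝ) α, HasDerivAt w''' (w'''' x) x)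
    (hFc : ContinuousOn F (Icc 0 α)) (hF : ∀ x, F x = w'''' x - (ω:ℂ)^4 * w x)
    (hC₁ : C₁ = w''' α + I * ω * w'' α - ω ^ 2 * w' α - I * ω ^ 3 * w α)
    (hC₂ : C₂ = w'' α - ω ^ 2 * w α) {τ : ℝ} (hτ : τ ∈ Icc 0 α) :
    w'' τ - ω ^ 2 * w τ = C₂ * exp (-(I * ((ω * (τ - α) : ℝ) : ℂ)))
      + C₁ / ω * Real.sin (ω * (τ - α)) + 1 / ω * ∫ s in α..τ, Real.sin (ω * (τ - s)) * F s := by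
  have hωC : (ω : ℂ) ≠ 0 := ofReal_ne_zero.mpr hω
  have hh : ∀ y ∈ Icc (0:ℝ) α, HasDerivWithinAt (fun y => w'' y - ω ^ 2 * w y)
      (w''' y - ω ^ 2 * w' y) (Icc 0 α) y := fun y hy =>
    ((hw3 y hy).fun_sub ((hw1 y hy).const_mul _)).hasDerivWithinAt
  have hh' : ∀ y ∈ Icc (0:ℝ) α, HasDerivWithinAt (fun y => w''' y - ω ^ 2 * w' y)
      (F y - ω ^ 2 * (w'' y - ω ^ 2 * w y)) (Icc 0 α) y := fun y hy =>
    ((hw4 y hy).fun_sub ((hw2 y hy).const_mul _)).hasDerivWithinAt.congr_deriv (by rw [hF]; ring)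
  rw [eq_cos_add_sin_add_integral_of_hasDerivWithinAt hω hh hh' hFc ⟨hτ.1.trans hτ.2, le_rfl⟩ hτ,
    hC₁, hC₂,
    show -(I * ((ω * (τ - α) : ℝ) : ℂ)) = ((-(ω * (τ - α)) : ℝ) : ℂ) * I by push_cast; ring,
    exp_mul_I, ofReal_neg, cos_neg, sin_neg]
  generalize ∫ s in α..τ, (Real.sin (ω * (τ - s)) : ℂ) * F s = V
  push_cast
  field_simp
  ring

theorem stmt_11_general (α ω : ℝ) (hω : 0 < ω)
    (w w' w'' w''' w'''' : ℝ → ℂ)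
    (hw1 : ∀ x ∈ Set.Icc (0:ℝ) α, HasDerivAt w (w' x) x)
    (hw2 : ∀ x ∈ Set.Icc (0:ℝ) α, HasDerivAt w' (w'' x) x)
    (hw3 : ∀ x ∈ Set.Icc (0:ℝ) α, HasDerivAt w'' (w''' x) x)
    (hw4 : ∀ x ∈ Set.Icc (0:ℝ) α, HasDerivAt w''' (w'''' x) x)
    (hcont : ContinuousOn w'''' (Set.Icc (0:ℝ) α))
    (hbc0 : w 0 = 0) (hbc1 : w' 0 = 0)
    (F : ℝ → ℂ) (hF : ∀ x, F x = w'''' x - (ω:ℂ)^4 * w x)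
    (C₁' C₂' : ℂ)
    (hC₁' : C₁' = w''' α + Complex.I * (ω:ℂ) * w'' α - (ω:ℂ)^2 * w' α
                   - Complex.I * (ω:ℂ)^3 * w α)
    (hC₂' : C₂' = w'' α - (ω:ℂ)^2 * w α) :
    ∀ x ∈ Set.Icc (0:ℝ) α,
      w' x - (ω:ℂ) * w x
        = C₂' / ((1 - Complex.I) * (ω:ℂ))
            * (Complex.exp (-(Complex.I * ((ω * (x - α) : ℝ) : ℂ)))
               - ((Real.exp (-(ω * x)) : ℝ) : ℂ)
                 * Complex.exp (Complex.I * ((ω * α : ℝ) : ℂ)))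
          + C₁' / (2 * (ω:ℂ)^2)
            * ((Real.sin (ω * (x - α)) - Real.cos (ω * (x - α))
                + Real.exp (-(ω * x)) * (Real.sin (ω * α) + Real.cos (ω * α)) : ℝ) : ℂ)
          + (1 / (ω:ℂ))
            * ∫ τ in (0:ℝ)..x, ∫ s in α..τ,
                ((Real.exp (-(ω * (x - τ))) * Real.sin (ω * (τ - s)) : ℝ) : ℂ) * F s := by
  intro x hx
  have hsub : uIcc 0 x ⊆ Icc 0 α := uIcc_subset_Icc ⟨le_rfl, hx.1.trans hx.2⟩ hx
  have hwc : ContinuousOn w (Icc 0 α) := fun τ hτ => (hw1 τ hτ).continuousAt.continuousWithinAt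
  have hcurv : ContinuousOn (fun τ => w'' τ - (ω:ℂ) ^ 2 * w τ) (Icc 0 α) :=
    ContinuousOn.sub (fun τ hτ => (hw3 τ hτ).continuousAt.continuousWithinAt)
      (continuousOn_const.mul hwc)
  have hFc : ContinuousOn F (Icc 0 α) := by
    rw [show F = fun y => w'''' y - (ω:ℂ)^4 * w y from funext hF]
    exact hcont.sub (continuousOn_const.mul hwc)
  rw [deriv_sub_mul_eq_integral_exp_mul hw1 hw2 hcurv hbc0 hbc1 hx]
  exact integral_exp_neg_mul_eq_of_forall_eq hω.ne' (hcurv.mono hsub) fun τ hτ =>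
    deriv2_sub_sq_mul_eq hω.ne' hw1 hw2 hw3 hw4 hFc hF hC₁' hC₂' (hsub hτ)

/-- Representation of `w' - ωw` for a clamped beam function (`w(0) = w'(0) = 0`)
in terms of the data `C₁'`, `C₂'` at `α` and the source `F = w'''' - ω⁴w`. -/
theorem stmt_11 (α ω : ℝ) (hα : 0 < α) (hω : 0 < ω)
    (w w' w'' w''' w'''' : ℝ → ℂ)
    (hw1 : ∀ x ∈ Set.Icc (0:ℝ) α, HasDerivAt w (w' x) x)
    (hw2 : ∀ x ∈ Set.Icc (0:ℝ) α, HasDerivAt w' (w'' x) x)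
    (hw3 : ∀ x ∈ Set.Icc (0:ℝ) α, HasDerivAt w'' (w''' x) x)
    (hw4 : ∀ x ∈ Set.Icc (0:ℝ) α, HasDerivAt w''' (w'''' x) x)
    (hcont : ContinuousOn w'''' (Set.Icc (0:ℝ) α))
    (hbc0 : w 0 = 0) (hbc1 : w' 0 = 0)
    (F : ℝ → ℂ) (hF : ∀ x, F x = w'''' x - (ω:ℂ)^4 * w x)
    (C₁' C₂' : ℂ)
    (hC₁' : C₁' = w''' α + Complex.I * (ω:ℂ) * w'' α - (ω:ℂ)^2 * w' α
                   - Complex.I * (ω:ℂ)^3 * w α)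
    (hC₂' : C₂' = w'' α - (ω:ℂ)^2 * w α) :
    ∀ x ∈ Set.Icc (0:ℝ) α,
      w' x - (ω:ℂ) * w x
        = C₂' / ((1 - Complex.I) * (ω:ℂ))
            * (Complex.exp (-(Complex.I * ((ω * (x - α) : ℝ) : ℂ)))
               - ((Real.exp (-(ω * x)) : ℝ) : ℂ)
                 * Complex.exp (Complex.I * ((ω * α : ℝ) : ℂ)))
          + C₁' / (2 * (ω:ℂ)^2)
            * ((Real.sin (ω * (x - α)) - Real.cos (ω * (x - α))
                + Real.exp (-(ω * x)) * (Real.sin (ω * α) + Real.cos (ω * α)) : ℝ) : ℂ)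
          + (1 / (ω:ℂ))
            * ∫ τ in (0:ℝ)..x, ∫ s in α..τ,
                ((Real.exp (-(ω * (x - τ))) * Real.sin (ω * (τ - s)) : ℝ) : ℂ) * F s :=
  stmt_11_general α ω hω w w' w'' w''' w'''' hw1 hw2 hw3 hw4 hcont hbc0 hbc1 F hF C₁' C₂' hC₁' hC₂'
end

section
/- Let a < b be real numbers and let u : ℝ → ℂ be continuously differentiable on [a, b]. Then |u(a)|² ≤ (1/(b - a))·∫_a^b |u(x)|² dx + 2·(∫_a^b |u(x)|² dx)^{1/2}·(∫_a^b |u'(x)|² dx)^{1/2}. -/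
/-! By the fundamental theorem of calculus, `‖u a‖² ≤ ‖u y‖² + ∫ |(‖u‖²)'|` for every `y ∈ [a, b]`;
averaging over `y` gives the first term. Since `(‖u‖²)' = 2⟪u, u'⟫`, Cauchy–Schwarz bounds the
remaining integral by `2 ‖u‖₂ ‖u'‖₂`. -/

open MeasureTheory Set intervalIntegral

theorem ContinuousOn.memLp_restrict_Ioc {E : Type*} [NormedAddCommGroup E] {f : ℝ → E}
    {a b : ℝ} (hf : ContinuousOn f (Icc a b)) (p : ENNReal) :
    MemLp f p (volume.restrict (Ioc a b)) := by
  obtain ⟨C, hC⟩ := isCompact_Icc.exists_bound_of_continuousOn hf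
  refine .of_bound ((hf.mono Ioc_subset_Icc_self).aestronglyMeasurable measurableSet_Ioc) C ?_
  exact ae_restrict_of_forall_mem measurableSet_Ioc fun x hx => hC x (Ioc_subset_Icc_self hx)

theorem intervalIntegral.integral_norm_mul_norm_le {E : Type*} [NormedAddCommGroup E]
    {f g : ℝ → E} {a b : ℝ} (hab : a ≤ b) (hf : ContinuousOn f (Icc a b))
    (hg : ContinuousOn g (Icc a b)) :
    ∫ x in a..b, ‖f x‖ * ‖g x‖ ≤ √(∫ x in a..b, ‖f x‖ ^ 2) * √(∫ x in a..b, ‖g x‖ ^ 2) := by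
  have key := integral_mul_norm_le_Lp_mul_Lq Real.HolderConjugate.two_two
    (hf.memLp_restrict_Ioc _) (hg.memLp_restrict_Ioc _)
  simp only [Real.rpow_two, ← Real.sqrt_eq_rpow] at key
  simpa only [integral_of_le hab] using key

theorem sub_le_integral_abs_deriv {F F' : ℝ → ℝ} {a b y : ℝ}
    (hF : ∀ x ∈ Icc a b, HasDerivAt F (F' x) x) (hF' : IntervalIntegrable F' volume a b)
    (hy : y ∈ Icc a b) :
    F a - F y ≤ ∫ x in a..b, |F' x| := by
  have hsub : uIcc a y ⊆ Icc a b := by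
    rw [uIcc_of_le hy.1]; exact Icc_subset_Icc_right hy.2
  have ftc : ∫ x in a..y, F' x = F y - F a :=
    integral_eq_sub_of_hasDerivAt (fun x hx => hF x (hsub hx))
      (hF'.mono_set (hsub.trans Icc_subset_uIcc))
  calc F a - F y ≤ |∫ x in a..y, F' x| := by rw [ftc, abs_sub_comm]; exact le_abs_self _
    _ ≤ ∫ x in a..y, |F' x| := abs_integral_le_integral_abs hy.1
    _ ≤ ∫ x in a..b, |F' x| :=
      integral_mono_interval le_rfl hy.1 hy.2 (.of_forall fun _ => abs_nonneg _) hF'.abs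

theorem le_average_add_integral_abs_deriv {F F' : ℝ → ℝ} {a b : ℝ} (hab : a < b)
    (hF : ∀ x ∈ Icc a b, HasDerivAt F (F' x) x) (hF' : IntervalIntegrable F' volume a b) :
    F a ≤ 1 / (b - a) * (∫ x in a..b, F x) + ∫ x in a..b, |F' x| := by
  set C := ∫ x in a..b, |F' x|
  have hFint : IntervalIntegrable F volume a b :=
    ContinuousOn.intervalIntegrable fun x hx =>
      (hF x (by rwa [uIcc_of_le hab.le] at hx)).continuousAt.continuousWithinAt
  have hmono : ∫ _ in a..b, (F a - C) ≤ ∫ y in a..b, F y :=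
    integral_mono_on hab.le intervalIntegrable_const hFint fun y hy => by
      linarith [sub_le_integral_abs_deriv hF hF' hy]
  rw [intervalIntegral.integral_const, smul_eq_mul] at hmono
  rw [one_div_mul_eq_div, ← sub_le_iff_le_add, le_div_iff₀ (sub_pos.2 hab), mul_comm]
  exact hmono

/-- One-dimensional trace estimate: the boundary value `|u(a)|²` is bounded by the
`L²` norms of `u` and `u'` on `(a, b)`. -/
theorem stmt_13 (a b : ℝ) (hab : a < b)
    (u u' : ℝ → ℂ)
    (hu : ∀ x ∈ Set.Icc a b, HasDerivAt u (u' x) x)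
    (hcont : ContinuousOn u' (Set.Icc a b)) :
    ‖u a‖^2
      ≤ 1 / (b - a) * (∫ x in a..b, ‖u x‖^2)
        + 2 * Real.sqrt (∫ x in a..b, ‖u x‖^2)
            * Real.sqrt (∫ x in a..b, ‖u' x‖^2) := by
  have hu_cont : ContinuousOn u (Icc a b) := fun x hx =>
    (hu x hx).continuousAt.continuousWithinAt
  have hderiv_cont : ContinuousOn (fun x => 2 * inner ℝ (u x) (u' x)) (Icc a b) :=
    continuousOn_const.mul (hu_cont.inner hcont)
  have hbound : ∫ x in a..b, |2 * inner ℝ (u x) (u' x)| ≤ 2 * ∫ x in a..b, ‖u x‖ * ‖u' x‖ := by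
    rw [← intervalIntegral.integral_const_mul]
    refine integral_mono_on hab.le (hderiv_cont.abs.intervalIntegrable_of_Icc hab.le)
      (ContinuousOn.intervalIntegrable_of_Icc hab.le (by fun_prop)) fun x _ => ?_
    rw [abs_mul, abs_two]
    gcongr
    exact abs_real_inner_le_norm _ _
  calc ‖u a‖ ^ 2
      ≤ 1 / (b - a) * (∫ x in a..b, ‖u x‖ ^ 2) + ∫ x in a..b, |2 * inner ℝ (u x) (u' x)| :=
        le_average_add_integral_abs_deriv hab (fun x hx => (hu x hx).norm_sq)
          (hderiv_cont.intervalIntegrable_of_Icc hab.le)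
    _ ≤ 1 / (b - a) * (∫ x in a..b, ‖u x‖ ^ 2) + 2 * ∫ x in a..b, ‖u x‖ * ‖u' x‖ := by gcongr
    _ ≤ _ := by
      rw [mul_assoc]
      gcongr
      exact integral_norm_mul_norm_le hab.le hu_cont hcont
end

section
/- Let α > 0, let ω > 0, and let f : ℝ → ℂ be continuous on [0, α]. Then |ω²·∫₀^α (∫₀^s exp(-ω·(α - τ))·sin(ω·(τ - s)) dτ)·f(s) ds| ≤ (α·ω·exp(-α·ω) + 1/2 - exp(-α·ω)/2)·max_{s ∈ [0, α]} |f(s)|. -/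
/-!
The inner integral has the closed form
`exp (-ω α) (cos ωs + sin ωs - exp ωs) / (2ω)`, whose modulus is at most
`exp (-ω α) (2 + exp ωs) / (2ω)` since `|cos + sin| ≤ 2`. Bounding `f` by its supremum on `[0, α]`
and integrating this majorant explicitly gives the constant.
-/

open Complex intervalIntegral

theorem integral_exp_mul_sin_eq {α ω : ℝ} (hω : ω ≠ 0) (s : ℝ) :
    ∫ τ in (0:ℝ)..s, Real.exp (-(ω * (α - τ))) * Real.sin (ω * (τ - s)) =
      Real.exp (-(ω * α)) * (Real.cos (ω * s) + Real.sin (ω * s) - Real.exp (ω * s)) / (2 * ω) := by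
  have hderiv : ∀ τ : ℝ, HasDerivAt
      (fun τ => Real.exp (-(ω * (α - τ))) * (Real.sin (ω * (τ - s)) - Real.cos (ω * (τ - s))) / (2 * ω))
      (Real.exp (-(ω * (α - τ))) * Real.sin (ω * (τ - s))) τ := by
    intro τ
    have hexp : HasDerivAt (fun τ => -(ω * (α - τ))) ω τ := by
      exact (((hasDerivAt_id τ).const_sub α).const_mul ω).neg.congr_deriv (by ring)
    have hphase : HasDerivAt (fun τ => ω * (τ - s)) ω τ := by
      simpa using ((hasDerivAt_id τ).sub_const s).const_mul ω
    refine ((hexp.exp.mul (hphase.sin.sub hphase.cos)).div_const (2 * ω)).congr_deriv ?_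
    simp only [Pi.sub_apply]
    field_simp
    ring
  rw [integral_eq_sub_of_hasDerivAt (fun τ _ => hderiv τ) (by apply Continuous.intervalIntegrable; fun_prop)]
  have hsplit : Real.exp (-(ω * (α - s))) = Real.exp (-(ω * α)) * Real.exp (ω * s) := by
    rw [← Real.exp_add]; ring_nf
  simp only [sub_self, mul_zero, Real.sin_zero, Real.cos_zero, zero_sub, sub_zero, mul_neg,
    Real.sin_neg, Real.cos_neg, hsplit]
  ring

theorem abs_cos_add_sin_sub_le (x y : ℝ) : |Real.cos x + Real.sin x - y| ≤ 2 + |y| := by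
  linarith [abs_sub (Real.cos x + Real.sin x) y, abs_add_le (Real.cos x) (Real.sin x),
    Real.abs_cos_le_one x, Real.abs_sin_le_one x]

theorem integral_two_add_exp_mul {ω : ℝ} (hω : ω ≠ 0) (a : ℝ) :
    ∫ s in (0:ℝ)..a, (2 + Real.exp (ω * s)) = 2 * a + (Real.exp (ω * a) - 1) / ω := by
  rw [integral_add intervalIntegrable_const (by apply Continuous.intervalIntegrable; fun_prop),
    integral_const, integral_comp_mul_left (fun x => Real.exp x) hω, integral_exp]
  simp only [mul_zero, Real.exp_zero, sub_zero, smul_eq_mul]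
  field_simp

theorem norm_le_sSup_image_norm {E : Type*} [SeminormedAddCommGroup E] {f : ℝ → E} {K : Set ℝ}
    (hK : IsCompact K) (hf : ContinuousOn f K) {s : ℝ} (hs : s ∈ K) :
    ‖f s‖ ≤ sSup ((fun s => ‖f s‖) '' K) :=
  le_csSup (hK.bddAbove_image hf.norm) ⟨s, hs, rfl⟩

theorem norm_integral_ofReal_mul_le {a b M : ℝ} {g G : ℝ → ℝ} {f : ℝ → ℂ} (hab : a ≤ b)
    (hG : IntervalIntegrable G MeasureTheory.volume a b) (hg : ∀ s ∈ Set.Icc a b, |g s| ≤ G s)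
    (hf : ∀ s ∈ Set.Icc a b, ‖f s‖ ≤ M) :
    ‖∫ s in a..b, (g s : ℂ) * f s‖ ≤ (∫ s in a..b, G s) * M := by
  rw [← integral_mul_const]
  refine norm_integral_le_of_norm_le hab (Filter.Eventually.of_forall fun s hs => ?_) (hG.mul_const M)
  have hs' : s ∈ Set.Icc a b := Set.Ioc_subset_Icc_self hs
  rw [norm_mul, norm_real, Real.norm_eq_abs]
  exact mul_le_mul (hg s hs') (hf s hs') (norm_nonneg _) ((abs_nonneg _).trans (hg s hs'))

/-- Estimate of the oscillatory double integral against the sup norm of `f` on `[0, α]`. -/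
theorem stmt_15 (α ω : ℝ) (hα : 0 < α) (hω : 0 < ω)
    (f : ℝ → ℂ) (hf : ContinuousOn f (Set.Icc (0:ℝ) α)) :
    ‖(ω:ℂ)^2
        * ∫ s in (0:ℝ)..α,
            ((∫ τ in (0:ℝ)..s, Real.exp (-(ω * (α - τ))) * Real.sin (ω * (τ - s)) : ℝ) : ℂ)
              * f s‖
      ≤ (α * ω * Real.exp (-(α * ω)) + 1/2 - Real.exp (-(α * ω)) / 2)
          * sSup ((fun s => ‖f s‖) '' Set.Icc (0:ℝ) α) := by
  have hkernel : ∀ s ∈ Set.Icc (0:ℝ) α,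
      |∫ τ in (0:ℝ)..s, Real.exp (-(ω * (α - τ))) * Real.sin (ω * (τ - s))| ≤
        Real.exp (-(ω * α)) / (2 * ω) * (2 + Real.exp (ω * s)) := by
    intro s _
    have hosc := abs_cos_add_sin_sub_le (ω * s) (Real.exp (ω * s))
    rw [abs_of_pos (Real.exp_pos _)] at hosc
    rw [integral_exp_mul_sin_eq hω.ne', mul_div_right_comm, abs_mul, abs_of_pos (by positivity)]
    gcongr
  have hbound := norm_integral_ofReal_mul_le hα.le
    (by apply Continuous.intervalIntegrable; fun_prop) hkernel
    (fun s hs => norm_le_sSup_image_norm isCompact_Icc hf hs)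
  rw [integral_const_mul, integral_two_add_exp_mul hω.ne'] at hbound
  have hconst : ω ^ 2 * (Real.exp (-(ω * α)) / (2 * ω) * (2 * α + (Real.exp (ω * α) - 1) / ω)) =
      α * ω * Real.exp (-(α * ω)) + 1/2 - Real.exp (-(α * ω)) / 2 := by
    rw [mul_comm α ω, Real.exp_neg]
    field_simp
    ring
  rw [norm_mul, norm_pow, norm_real, Real.norm_of_nonneg hω.le, ← hconst, mul_assoc]
  gcongr
end

section
/- Let λ ≠ 0 be a real number, let α > 0 be a real number, and let z : ℝ → ℂ be differentiable on [0, α] with z'(x) = i·λ·z(x) - cos(λ·(x - α)) for all x ∈ [0, α]. Then for every x ∈ [0, α]: z(x) = z(0)·exp(i·λ·x) - (x/2)·exp(i·λ·(x - α)) - exp(i·λ·α)·sin(λ·x)/(2·λ). -/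
open Complex

/-!
The Duhamel term `p(x) = -(x/2) e^{iλ(x-α)} - e^{iλα} sin(λx)/(2λ)` solves
`p' = iλp - cos(λ(x-α))` with `p(0) = 0`; checking this reduces, after expanding both
exponentials by Euler's formula, to the addition formulas for `cos` and `sin`. Hence `z - p`
solves `w' = iλw`, so `(z - p)(x) e^{-iλx}` has zero derivative on `[0, α]` and
`z(x) - p(x) = z(0) e^{iλx}`.
-/

theorem eq_mul_exp_of_hasDerivAt_const_mul {f : ℝ → ℂ} {c : ℂ} {a b : ℝ}
    (hf : ∀ x ∈ Set.Icc a b, HasDerivAt f (c * f x) x) :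
    ∀ x ∈ Set.Icc a b, f x = f a * exp (c * (x - a)) := by
  set g : ℝ → ℂ := fun t => f t * exp (-c * (t - a))
  have hg : ∀ x ∈ Set.Icc a b, HasDerivAt g 0 x := by
    intro x hx
    have he : HasDerivAt (fun t : ℝ => -c * ((t : ℂ) - a)) (-c) x := by
      simpa using ((hasDerivAt_id x).ofReal_comp.sub_const (a : ℂ)).const_mul (-c)
    exact ((hf x hx).mul he.cexp).congr_deriv (by ring)
  have hconst := constant_of_has_deriv_right_zero
    (fun x hx => (hg x hx).continuousAt.continuousWithinAt)
    (fun x hx => (hg x (Set.Ico_subset_Icc_self hx)).hasDerivWithinAt)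
  intro x hx
  have hgx : f x * exp (-c * (x - a)) = f a := by simpa [g] using hconst x hx
  rw [← hgx, mul_assoc, ← exp_add]
  simp

noncomputable def forcedSolution (lam α : ℝ) (x : ℝ) : ℂ :=
  -(x / 2 * exp (I * lam * (x - α))) - exp (I * lam * α) * sin (lam * x) / (2 * lam)

theorem hasDerivAt_forcedSolution {lam : ℝ} (hlam : lam ≠ 0) (α x : ℝ) :
    HasDerivAt (forcedSolution lam α)
      (I * lam * forcedSolution lam α x - cos (lam * (x - α))) x := by
  have hT : HasDerivAt (fun t : ℝ => (t : ℂ) / 2) (1 / 2) x := by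
    simpa using (hasDerivAt_id x).ofReal_comp.div_const (2 : ℂ)
  have hE : HasDerivAt (fun t : ℝ => exp (I * lam * (t - α)))
      (exp (I * lam * (x - α)) * (I * lam)) x := by
    simpa using (((hasDerivAt_id x).ofReal_comp.sub_const (α : ℂ)).const_mul (I * lam)).cexp
  have hS : HasDerivAt (fun t : ℝ => sin (lam * t)) (cos (lam * x) * lam) x := by
    simpa using ((hasDerivAt_id (x : ℂ)).const_mul (lam : ℂ)).csin.comp_ofReal
  refine ((hT.mul hE).neg.sub
    ((hS.const_mul (exp (I * lam * α))).div_const (2 * lam))).congr_deriv ?_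
  have hlam' : (lam : ℂ) ≠ 0 := ofReal_ne_zero.mpr hlam
  have hEx : exp (I * lam * (x - α)) = cos (lam * (x - α)) + sin (lam * (x - α)) * I := by
    rw [← exp_mul_I]; ring_nf
  have hB : exp (I * lam * α) = cos (lam * α) + sin (lam * α) * I := by
    rw [← exp_mul_I]; ring_nf
  rw [forcedSolution, hEx, hB, mul_sub, cos_sub, sin_sub]
  field_simp
  linear_combination sin (lam * α) * sin (lam * x) * I_sq

theorem stmt_19_general (lam α : ℝ) (hlam : lam ≠ 0)
    (z : ℝ → ℂ)
    (hz : ∀ x ∈ Set.Icc (0:ℝ) α,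
      HasDerivAt z (Complex.I * (lam:ℂ) * z x - ((Real.cos (lam * (x - α)) : ℝ) : ℂ)) x) :
    ∀ x ∈ Set.Icc (0:ℝ) α,
      z x = z 0 * Complex.exp (Complex.I * ((lam * x : ℝ) : ℂ))
            - (x:ℂ) / 2 * Complex.exp (Complex.I * ((lam * (x - α) : ℝ) : ℂ))
            - Complex.exp (Complex.I * ((lam * α : ℝ) : ℂ))
                * ((Real.sin (lam * x) : ℝ) : ℂ) / (2 * (lam:ℂ)) := by
  have hhom : ∀ x ∈ Set.Icc (0:ℝ) α, HasDerivAt (fun t => z t - forcedSolution lam α t)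
      (I * lam * (z x - forcedSolution lam α x)) x := fun x hx =>
    ((hz x hx).sub (hasDerivAt_forcedSolution hlam α x)).congr_deriv (by push_cast; ring)
  intro x hx
  have hx' := eq_mul_exp_of_hasDerivAt_const_mul hhom x hx
  simp only [forcedSolution, ofReal_zero, zero_div, zero_mul, mul_zero, sin_zero, neg_zero,
    sub_zero, mul_assoc] at hx'
  push_cast
  linear_combination hx'

/-- Explicit solution of the first-order equation `z' = iλz - cos(λ(x - α))` on `[0, α]`. -/
theorem stmt_19 (lam α : ℝ) (hlam : lam ≠ 0) (hα : 0 < α)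
    (z : ℝ → ℂ)
    (hz : ∀ x ∈ Set.Icc (0:ℝ) α,
      HasDerivAt z (Complex.I * (lam:ℂ) * z x - ((Real.cos (lam * (x - α)) : ℝ) : ℂ)) x) :
    ∀ x ∈ Set.Icc (0:ℝ) α,
      z x = z 0 * Complex.exp (Complex.I * ((lam * x : ℝ) : ℂ))
            - (x:ℂ) / 2 * Complex.exp (Complex.I * ((lam * (x - α) : ℝ) : ℂ))
            - Complex.exp (Complex.I * ((lam * α : ℝ) : ℂ))
                * ((Real.sin (lam * x) : ℝ) : ℂ) / (2 * (lam:ℂ)) :=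
  stmt_19_general lam α hlam z hz
end
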